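/- arXiv:math/0405345 — 3 statements merged into one kernel-verified Lean document; each statement's English description precedes it below -/
import Mathlib

section
/- Let n, d be integers with 1 ≤ d ≤ n, let 0 < δ ≤ 1, and suppose ε > 0 satisfies the equation ε = (d/n) log( e / (δ√ε) ). Then ε ≤ (d/n) log( n e² / (d δ) ). -/
/-- If `1 ≤ d ≤ n`, `0 < δ ≤ 1` and `ε > 0` solves `ε = (d/n) log(e/(δ√ε))`, then
`ε ≤ (d/n) log(ne²/(dδ))`. -/
theorem stmt15 (n d : ℕ) (hd : 1 ≤ d) (hdn : d ≤ n) (δ ε : ℝ) (hδ0 : 0 < δ) (hδ1 : δ ≤ 1)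
    (hε : 0 < ε)
    (heq : ε = (d : ℝ) / n * Real.log (Real.exp 1 / (δ * Real.sqrt ε))) :
    ε ≤ (d : ℝ) / n * Real.log ((n : ℝ) * Real.exp 2 / (d * δ)) := by
  have hd' : (1:ℝ) ≤ d := by exact_mod_cast hd
  have hdn' : (d:ℝ) ≤ n := by exact_mod_cast hdn
  have hn0 : (0:ℝ) < n := by linarith
  have hd0 : (0:ℝ) < d := by linarith
  obtain ⟨c, hc⟩ : ∃ c : ℝ, c = (d:ℝ)/n := ⟨_, rfl⟩
  rw [← hc] at heq
  rw [← hc]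
  have hc0 : 0 < c := hc ▸ div_pos hd0 hn0
  have hc1 : c ≤ 1 := by rw [hc, div_le_one hn0]; exact hdn'
  have hsε : 0 < Real.sqrt ε := Real.sqrt_pos.2 hε
  have he1 : (2:ℝ) < Real.exp 1 := by
    have := Real.exp_one_gt_d9; linarith
  have he2 : Real.exp 2 = Real.exp 1 * Real.exp 1 := by
    rw [← Real.exp_add]; norm_num
  have key : c / Real.exp 1 ≤ Real.sqrt ε := by
    by_contra h
    push_neg at h
    have h' : Real.sqrt ε * Real.exp 1 < c := (lt_div_iff₀ (Real.exp_pos 1)).mp h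
    have hεlt : ε * Real.exp 1 ^ 2 < c ^ 2 := by
      have hm : Real.sqrt ε * Real.sqrt ε = ε := Real.mul_self_sqrt hε.le
      nlinarith [mul_lt_mul_of_pos_left h' (mul_pos hsε (Real.exp_pos 1)),
        mul_lt_mul_of_pos_right h' hc0]
    have hδs : δ * Real.sqrt ε ≤ Real.sqrt ε := by nlinarith
    have hlog : Real.log (Real.exp 2 / c) ≤ Real.log (Real.exp 1 / (δ * Real.sqrt ε)) := by
      apply Real.log_le_log (by positivity)
      rw [div_le_div_iff₀ hc0 (by positivity), he2]
      nlinarith [Real.exp_pos 1, mul_lt_mul_of_pos_left h' (Real.exp_pos 1),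
        mul_le_mul_of_nonneg_left hδs (by positivity : (0:ℝ) ≤ Real.exp 1 * Real.exp 1)]
    have hlog2 : (2:ℝ) ≤ Real.log (Real.exp 2 / c) := by
      rw [Real.log_div (by positivity) hc0.ne', Real.log_exp]
      have := Real.log_nonpos hc0.le hc1
      linarith
    have h2c : 2 * c ≤ ε := by
      rw [heq]
      calc 2 * c = c * 2 := by ring
        _ ≤ c * Real.log (Real.exp 1 / (δ * Real.sqrt ε)) :=
          mul_le_mul_of_nonneg_left (hlog2.trans hlog) hc0.le
    nlinarith [mul_le_mul_of_nonneg_right h2c (sq_nonneg (Real.exp 1)), sq_nonneg (Real.exp 1 - 2),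
      mul_nonneg hc0.le (sub_nonneg.2 hc1)]
  have hce : c ≤ Real.sqrt ε * Real.exp 1 := (div_le_iff₀ (Real.exp_pos 1)).mp key
  have hdle : (d:ℝ) ≤ (n:ℝ) * Real.exp 1 * Real.sqrt ε := by
    have hcn : (d:ℝ) = c * n := by rw [hc]; field_simp
    nlinarith [mul_le_mul_of_nonneg_right hce hn0.le]
  have hfinal : Real.log (Real.exp 1 / (δ * Real.sqrt ε)) ≤
      Real.log ((n : ℝ) * Real.exp 2 / (d * δ)) := by
    apply Real.log_le_log (by positivity)
    rw [div_le_div_iff₀ (by positivity) (by positivity), he2]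
    nlinarith [mul_le_mul_of_nonneg_left hdle
      (by positivity : (0:ℝ) ≤ Real.exp 1 * δ)]
  rw [heq]
  exact mul_le_mul_of_nonneg_left hfinal hc0.le
end

section
/- Let C > 2(2^{1/4} − 1)^{−1} and 0 < ε ≤ C^{−4}, and set γ_j := C^{2^{−j} − 1} ε^{2^{−j−1}} for integers j ≥ 0. Then for every integer k with 0 ≤ k ≤ log₂ log₂ ε^{−1}: ∑_{j=0}^k γ_j ≤ 1/2. -/
/-!
With `x = C√ε` every term is `γⱼ = C⁻¹ x^{2^{-j}}`. Put `u = x^{2^{-k}}`; then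
`x^{2^{-j}} = u^{2^{k-j}} ≤ u^{k-j+1}`, so the sum is at most `C⁻¹ u / (1 - u)`.
Since `C√ε ≤ ε^{1/4}` and `2^k ≤ log₂ ε⁻¹`, we get `u ≤ (ε^{2^{-k}})^{1/4} ≤ 2^{-1/4}`, hence
`u / (1 - u) ≤ (2^{1/4} - 1)⁻¹ < C / 2`.
-/

open Finset Real

lemma sum_range_pow_two_pow_le {u : ℝ} (hu0 : 0 ≤ u) (hu1 : u < 1) (n : ℕ) :
    ∑ i ∈ range n, u ^ 2 ^ i ≤ u / (1 - u) := by
  calc ∑ i ∈ range n, u ^ 2 ^ i ≤ ∑ i ∈ range n, u ^ (1 + i) :=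
        sum_le_sum fun i _ ↦ pow_le_pow_of_le_one hu0 hu1.le (add_comm 1 i ▸ Nat.lt_two_pow_self)
    _ = ∑ i ∈ Ico 1 (n + 1), u ^ i := by rw [sum_Ico_eq_sum_range, Nat.add_sub_cancel]
    _ ≤ u / (1 - u) := by simpa using geom_sum_Ico_le_of_lt_one (m := 1) (n := n + 1) hu0 hu1

lemma rpow_inv_two_pow_eq_pow {x : ℝ} (hx : 0 ≤ x) {j k : ℕ} (hjk : j ≤ k) :
    x ^ ((2 : ℝ) ^ j)⁻¹ = (x ^ ((2 : ℝ) ^ k)⁻¹) ^ 2 ^ (k - j) := by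
  rw [← rpow_natCast (x ^ _), ← rpow_mul hx, Nat.cast_pow, Nat.cast_ofNat,
    ← Nat.add_sub_cancel' hjk, pow_add, Nat.add_sub_cancel_left]
  field_simp

lemma sum_range_rpow_inv_two_pow_le {x : ℝ} (hx : 0 ≤ x) (k : ℕ)
    (hlt : x ^ ((2 : ℝ) ^ k)⁻¹ < 1) :
    ∑ j ∈ range (k + 1), x ^ ((2 : ℝ) ^ j)⁻¹ ≤
      x ^ ((2 : ℝ) ^ k)⁻¹ / (1 - x ^ ((2 : ℝ) ^ k)⁻¹) := by
  calc ∑ j ∈ range (k + 1), x ^ ((2 : ℝ) ^ j)⁻¹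
      = ∑ j ∈ range (k + 1), (x ^ ((2 : ℝ) ^ k)⁻¹) ^ 2 ^ (k - j) :=
        sum_congr rfl fun j hj ↦ rpow_inv_two_pow_eq_pow hx (Nat.lt_succ_iff.mp (mem_range.mp hj))
    _ = ∑ i ∈ range (k + 1), (x ^ ((2 : ℝ) ^ k)⁻¹) ^ 2 ^ i := by
        simpa using sum_range_reflect (fun i ↦ (x ^ ((2 : ℝ) ^ k)⁻¹) ^ 2 ^ i) (k + 1)
    _ ≤ _ := sum_range_pow_two_pow_le (by positivity) hlt _

lemma rpow_inv_le_half_of_le_logb {ε a : ℝ} (hε : 0 < ε) (ha : 0 < a)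
    (haε : a ≤ logb 2 ε⁻¹) : ε ^ a⁻¹ ≤ 1 / 2 := by
  set L := logb 2 ε⁻¹
  have hε' : ε = 2 ^ (-L) := by
    rw [rpow_neg zero_le_two, rpow_logb zero_lt_two (by norm_num) (inv_pos.mpr hε), inv_inv]
  rw [hε', ← rpow_mul zero_le_two, show (1 / 2 : ℝ) = 2 ^ (-1 : ℝ) by norm_num]
  apply rpow_le_rpow_of_exponent_le one_le_two
  rw [neg_mul, neg_le_neg_iff, le_mul_inv_iff₀ ha, one_mul]
  exact haε

lemma mul_sqrt_le_rpow_quarter {C ε : ℝ} (hC : 0 ≤ C) (hε0 : 0 ≤ ε) (hε : ε ≤ (C ^ 4)⁻¹) :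
    C * √ε ≤ ε ^ (1 / 4 : ℝ) := by
  set t := ε ^ (1 / 4 : ℝ)
  have ht4 : t ^ 4 = ε := by
    rw [← rpow_natCast, ← rpow_mul hε0]; norm_num
  have hsqrt : √ε = t ^ 2 := by
    rw [← ht4, show 4 = 2 * 2 by rfl, pow_mul, sqrt_sq (by positivity)]
  have hCt : C * t ≤ 1 := by
    rw [← pow_le_one_iff_of_nonneg (by positivity) four_ne_zero, mul_pow, ht4]
    calc C ^ 4 * ε ≤ C ^ 4 * (C ^ 4)⁻¹ := by gcongr
      _ ≤ 1 := mul_inv_le_one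
  calc C * √ε = C * t * t := by rw [hsqrt]; ring
    _ ≤ 1 * t := by gcongr
    _ = t := one_mul t

lemma rpow_sub_one_mul_rpow_half {C ε : ℝ} (hC : 0 < C) (hε : 0 ≤ ε) (a : ℝ) :
    C ^ (a - 1) * ε ^ (a / 2) = C⁻¹ * (C * √ε) ^ a := by
  rw [mul_rpow hC.le (sqrt_nonneg ε), sqrt_eq_rpow, ← rpow_mul hε, rpow_sub_one hC.ne']
  field_simp

lemma mul_sqrt_rpow_inv_le {C ε a : ℝ} (hC : 0 ≤ C) (hε0 : 0 < ε) (hε : ε ≤ (C ^ 4)⁻¹)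
    (ha : 0 < a) (haε : a ≤ logb 2 ε⁻¹) :
    (C * √ε) ^ a⁻¹ ≤ ((2 : ℝ) ^ (1 / 4 : ℝ))⁻¹ :=
  calc (C * √ε) ^ a⁻¹ ≤ (ε ^ (1 / 4 : ℝ)) ^ a⁻¹ :=
        rpow_le_rpow (by positivity) (mul_sqrt_le_rpow_quarter hC hε0.le hε) (by positivity)
    _ = (ε ^ a⁻¹) ^ (1 / 4 : ℝ) := by rw [← rpow_mul hε0.le, ← rpow_mul hε0.le, mul_comm]
    _ ≤ (1 / 2) ^ (1 / 4 : ℝ) := by gcongr; exact rpow_inv_le_half_of_le_logb hε0 ha haε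
    _ = ((2 : ℝ) ^ (1 / 4 : ℝ))⁻¹ := by rw [div_rpow zero_le_one zero_le_two, one_rpow, one_div]

lemma div_one_sub_le_of_le_inv {u s : ℝ} (hs : 1 < s) (hu : u ≤ s⁻¹) :
    u / (1 - u) ≤ 1 / (s - 1) := by
  have hus : u * s ≤ 1 :=
    calc u * s ≤ s⁻¹ * s := by gcongr
      _ = 1 := inv_mul_cancel₀ (by linarith)
  have hu1 : u < 1 := hu.trans_lt (inv_lt_one_of_one_lt₀ hs)
  rw [div_le_div_iff₀ (by linarith) (by linarith)]
  linarith

/-- If `C > 2(2^{1/4} − 1)⁻¹`, `0 < ε ≤ C⁻⁴` and `γⱼ = C^{2^{−j}−1} ε^{2^{−j−1}}`, then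
`∑_{j=0}^k γⱼ ≤ 1/2` for every `0 ≤ k ≤ log₂log₂ ε⁻¹`. -/
theorem stmt17 (C ε : ℝ) (hC : 2 / ((2 : ℝ) ^ ((1 : ℝ) / 4) - 1) < C) (hε0 : 0 < ε)
    (hε : ε ≤ (C ^ 4)⁻¹) (k : ℕ) (hk : (k : ℝ) ≤ Real.logb 2 (Real.logb 2 ε⁻¹)) :
    ∑ j ∈ Finset.range (k + 1),
        C ^ (((2 : ℝ) ^ j)⁻¹ - 1) * ε ^ (((2 : ℝ) ^ (j + 1))⁻¹) ≤ 1 / 2 := by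
  set s : ℝ := 2 ^ ((1 : ℝ) / 4)
  have hs1 : 1 < s := one_lt_rpow one_lt_two (by norm_num)
  have hs2 : s < 2 :=
    (rpow_lt_rpow_of_exponent_lt one_lt_two (by norm_num : (1 / 4 : ℝ) < 1)).trans_eq (rpow_one 2)
  have hC1 : 1 < C := lt_trans ((one_lt_div (sub_pos.2 hs1)).2 (by linarith)) hC
  have hε1 : ε < 1 := hε.trans_lt (inv_lt_one_of_one_lt₀ (one_lt_pow₀ hC1 four_ne_zero))
  have h2k : (2 : ℝ) ^ k ≤ logb 2 ε⁻¹ := by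
    rwa [le_logb_iff_rpow_le one_lt_two (logb_pos one_lt_two (one_lt_inv_iff₀.2 ⟨hε0, hε1⟩)),
      rpow_natCast] at hk
  set u := (C * √ε) ^ ((2 : ℝ) ^ k)⁻¹
  have hu : u ≤ s⁻¹ := mul_sqrt_rpow_inv_le (by linarith) hε0 hε (by positivity) h2k
  calc ∑ j ∈ range (k + 1), C ^ (((2 : ℝ) ^ j)⁻¹ - 1) * ε ^ ((2 : ℝ) ^ (j + 1))⁻¹
      = C⁻¹ * ∑ j ∈ range (k + 1), (C * √ε) ^ ((2 : ℝ) ^ j)⁻¹ := by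
        rw [mul_sum]
        refine sum_congr rfl fun j _ ↦ ?_
        rw [pow_succ, mul_inv, ← div_eq_mul_inv, rpow_sub_one_mul_rpow_half (by linarith) hε0.le]
    _ ≤ C⁻¹ * (u / (1 - u)) := by
        gcongr
        exact sum_range_rpow_inv_two_pow_le (by positivity) k
          (hu.trans_lt (inv_lt_one_of_one_lt₀ hs1))
    _ ≤ C⁻¹ * (1 / (s - 1)) := by gcongr C⁻¹ * ?_; exact div_one_sub_le_of_le_inv hs1 hu
    _ ≤ C⁻¹ * (C / 2) := by
        gcongr C⁻¹ * ?_
        rw [div_le_div_iff₀ (by linarith) two_pos, one_mul]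
        exact ((div_lt_iff₀ (by linarith)).1 hC).le
    _ = 1 / 2 := by field_simp
end

section
/- Let f ∈ conv(𝓗), δ ∈ (0,1), 0 < t < n^{α/(2+α)}, and set Δ₀ := δ n^{−1/2} t^{1/α + 1/2}. Then for every Δ̄ ∈ Δ_f: inf{ ε_n(d(f;Δ);δ;Δ) : Δ ∈ Δ_f, Δ ≥ Δ₀ } ≤ ε_n(d(f;Δ̄);δ;Δ̄) + t/n. In particular, if the infimum defining ε_n(f;δ) is attained at some Δ̄ ∈ Δ_f, then inf{ ε_n(d(f;Δ);δ;Δ) : Δ ∈ Δ_f, Δ ≥ Δ₀ } ≤ ε_n(f;δ) + t/n. -/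
/-!
If `Δ̄ ≥ Δ₀` then `Δ̄` itself is admissible in the restricted infimum. Otherwise use `Δ₀`, which
lies in `[0, 1]` because `t < n^{α/(2+α)}` forces `Δ₀ < δ`. Since `d(f;·)` is nonincreasing,
`d(f;Δ₀) ≤ d(f;Δ̄) ≤ n`. With `C = log(1/δ) + log n + 2`, the dimension term
`(d/n)(log(1/δ) + log(ne²/d)) = (Cd − d log d)/n` is nondecreasing in `d` on
`[0, e^{C-1}] ⊇ [0, n]`, so it does not grow, and the approximation term at `Δ₀` is exactly `t/n`.
-/

open Real

noncomputable section

/-- The symmetric convex hull `conv(H)`. -/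
def symConv {S : Type*} (H : Set (S → ℝ)) : Set (S → ℝ) :=
  {f | ∃ (N : ℕ) (_ : 1 ≤ N) (lam : Fin N → ℝ) (h : Fin N → S → ℝ),
    (∀ i, h i ∈ H) ∧ (∑ i, |lam i|) ≤ 1 ∧ f = fun x => ∑ i, lam i * h i x}

/-- `f` admits a representation witnessing `d(f;Δ) ≤ d`. -/
def hasDim {S : Type*} (H : Set (S → ℝ)) (f : S → ℝ) (Δ : ℝ) (d : ℕ) : Prop :=
  ∃ (N : ℕ) (_ : 1 ≤ N) (lam : Fin N → ℝ) (h : Fin N → S → ℝ),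
    (∀ i, h i ∈ H) ∧ (∑ i, |lam i|) ≤ 1 ∧
    (∑ i, if d ≤ i.val then |lam i| else 0) ≤ Δ ∧
    f = fun x => ∑ i, lam i * h i x

/-- The approximate `Δ`-dimension `d(f;Δ)` of `f`. -/
def apxDim {S : Type*} (H : Set (S → ℝ)) (f : S → ℝ) (Δ : ℝ) : ℕ :=
  sInf {d : ℕ | hasDim H f Δ d}

/-- The quantity inside the infimum defining `ε_n(f;δ)`, for a given dimension `d` and `Δ`. -/
def rawEps (α : ℝ) (n d : ℕ) (δ Δ : ℝ) : ℝ :=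
  (d : ℝ) / n * (Real.log (1 / δ) + Real.log ((n : ℝ) * Real.exp 2 / d)) +
    (Δ / δ) ^ (2 * α / (α + 2)) * (n : ℝ) ^ (-(2 / (α + 2)))

/-- `ε_n(d;δ;Δ) = rawEps ∨ (2 log n)/n`. -/
def epsNDD (α : ℝ) (n d : ℕ) (δ Δ : ℝ) : ℝ :=
  max (rawEps α n d δ Δ) (2 * Real.log n / n)

/-- `ε_n(f;δ)`. -/
def epsDim {S : Type*} (H : Set (S → ℝ)) (α : ℝ) (n : ℕ) (f : S → ℝ) (δ : ℝ) : ℝ :=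
  max (sInf {v : ℝ | ∃ Δ ∈ Set.Icc (0 : ℝ) 1, apxDim H f Δ ≤ n ∧
      v = rawEps α n (apxDim H f Δ) δ Δ})
    (2 * Real.log n / n)

open Set

lemma monotoneOn_mul_add_negMulLog (C : ℝ) :
    MonotoneOn (fun x => C * x + negMulLog x) (Icc 0 (exp (C - 1))) := by
  refine monotoneOn_of_hasDerivWithinAt_nonneg (convex_Icc _ _) (by fun_prop)
    (f' := fun x => C + (-log x - 1)) (fun x hx => ?_) (fun x hx => ?_) <;>
    rw [interior_Icc] at hx
  · exact (((hasDerivAt_id x).const_mul C).add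
      (hasDerivAt_negMulLog hx.1.ne')).hasDerivWithinAt.congr_deriv (by simp)
  · have : log x < C - 1 := (log_lt_iff_lt_exp hx.1).mpr hx.2
    linarith

lemma div_mul_add_log_div_eq (a : ℝ) (n d : ℕ) :
    (d : ℝ) / n * (a + log (n * exp 2 / d)) = ((a + log n + 2) * d + negMulLog d) / n := by
  rcases Nat.eq_zero_or_pos d with rfl | hd
  · simp
  rcases Nat.eq_zero_or_pos n with rfl | hn
  · simp
  rw [log_div (by positivity) (by positivity), log_mul (by positivity) (by positivity),
    log_exp, negMulLog]
  ring

lemma div_mul_add_log_div_le {a : ℝ} (ha : -1 ≤ a) {n d₀ d : ℕ} (hd : d₀ ≤ d) (hdn : d ≤ n) :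
    (d₀ : ℝ) / n * (a + log (n * exp 2 / d₀)) ≤ (d : ℝ) / n * (a + log (n * exp 2 / d)) := by
  rw [div_mul_add_log_div_eq, div_mul_add_log_div_eq]
  have hd_le : (d : ℝ) ≤ exp (a + log n + 2 - 1) :=
    calc (d : ℝ) ≤ n := by exact_mod_cast hdn
      _ ≤ exp (log n) := le_exp_log _
      _ ≤ exp (a + log n + 2 - 1) := exp_le_exp.mpr (by linarith)
  refine div_le_div_of_nonneg_right (monotoneOn_mul_add_negMulLog _ ?_ ?_ ?_) n.cast_nonneg
  · exact ⟨d₀.cast_nonneg, (Nat.cast_le.mpr hd).trans hd_le⟩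
  · exact ⟨d.cast_nonneg, hd_le⟩
  · exact_mod_cast hd

lemma rawEps_le_rawEps_add {α δ Δ₀ Δ : ℝ} {n d₀ d : ℕ} (hδ0 : 0 < δ) (hδ1 : δ ≤ 1)
    (hd : d₀ ≤ d) (hdn : d ≤ n) (hΔ : 0 ≤ Δ) :
    rawEps α n d₀ δ Δ₀ ≤
      rawEps α n d δ Δ + (Δ₀ / δ) ^ (2 * α / (α + 2)) * (n : ℝ) ^ (-(2 / (α + 2))) := by
  have hdim := div_mul_add_log_div_le (a := log (1 / δ))
    (by linarith [log_nonneg (one_le_one_div hδ0 hδ1)]) hd hdn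
  have hΔterm : 0 ≤ (Δ / δ) ^ (2 * α / (α + 2)) * (n : ℝ) ^ (-(2 / (α + 2))) := by positivity
  unfold rawEps
  linarith

lemma epsNDD_le_epsNDD_add {α δ Δ₀ Δ : ℝ} {n d₀ d : ℕ} (hδ0 : 0 < δ) (hδ1 : δ ≤ 1)
    (hd : d₀ ≤ d) (hdn : d ≤ n) (hΔ₀ : 0 ≤ Δ₀) (hΔ : 0 ≤ Δ) :
    epsNDD α n d₀ δ Δ₀ ≤
      epsNDD α n d δ Δ + (Δ₀ / δ) ^ (2 * α / (α + 2)) * (n : ℝ) ^ (-(2 / (α + 2))) := by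
  have hΔ₀term : 0 ≤ (Δ₀ / δ) ^ (2 * α / (α + 2)) * (n : ℝ) ^ (-(2 / (α + 2))) := by positivity
  rw [epsNDD, epsNDD, ← max_add_add_right]
  exact max_le_max (rawEps_le_rawEps_add hδ0 hδ1 hd hdn hΔ) (le_add_of_nonneg_right hΔ₀term)

lemma hasDim.mono {S : Type*} {H : Set (S → ℝ)} {f : S → ℝ} {Δ Δ' : ℝ} {d : ℕ}
    (h : hasDim H f Δ d) (hΔ : Δ ≤ Δ') : hasDim H f Δ' d := by
  obtain ⟨N, hN, lam, g, hg, hl, hs, rfl⟩ := h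
  exact ⟨N, hN, lam, g, hg, hl, hs.trans hΔ, rfl⟩

lemma hasDim_of_mem_symConv {S : Type*} {H : Set (S → ℝ)} {f : S → ℝ} {Δ : ℝ}
    (hf : f ∈ symConv H) (hΔ : 0 ≤ Δ) : {d | hasDim H f Δ d}.Nonempty := by
  obtain ⟨N, hN, lam, h, hH, hl, rfl⟩ := hf
  refine ⟨N, N, hN, lam, h, hH, hl, ?_, rfl⟩
  rwa [Finset.sum_eq_zero fun i _ => if_neg (not_le.mpr i.is_lt)]

lemma apxDim_antitoneOn {S : Type*} {H : Set (S → ℝ)} {f : S → ℝ} (hf : f ∈ symConv H) :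
    AntitoneOn (apxDim H f) (Ici 0) := fun _ hΔ _ _ hΔΔ' =>
  Nat.sInf_le (hasDim.mono (Nat.sInf_mem (hasDim_of_mem_symConv hf hΔ)) hΔΔ')

lemma sInf_epsNDD_le_epsNDD_add {S : Type*} {H : Set (S → ℝ)} {f : S → ℝ}
    (hf : f ∈ symConv H) {α δ Δ₀ Δb : ℝ} {n : ℕ} (hδ0 : 0 < δ) (hδ1 : δ ≤ 1)
    (hΔ₀ : Δ₀ ∈ Icc (0 : ℝ) 1) (hΔb : Δb ∈ Icc (0 : ℝ) 1) (hdb : apxDim H f Δb ≤ n) :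
    sInf {v : ℝ | ∃ Δ ∈ Icc (0 : ℝ) 1, apxDim H f Δ ≤ n ∧ Δ₀ ≤ Δ ∧
        v = epsNDD α n (apxDim H f Δ) δ Δ} ≤
      epsNDD α n (apxDim H f Δb) δ Δb +
        (Δ₀ / δ) ^ (2 * α / (α + 2)) * (n : ℝ) ^ (-(2 / (α + 2))) := by
  have hbdd : BddBelow {v : ℝ | ∃ Δ ∈ Icc (0 : ℝ) 1, apxDim H f Δ ≤ n ∧ Δ₀ ≤ Δ ∧
      v = epsNDD α n (apxDim H f Δ) δ Δ} :=
    ⟨2 * log n / n, by rintro _ ⟨Δ, -, -, -, rfl⟩; exact le_max_right _ _⟩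
  rcases le_or_gt Δ₀ Δb with hle | hlt
  · have hΔ₀term : 0 ≤ (Δ₀ / δ) ^ (2 * α / (α + 2)) * (n : ℝ) ^ (-(2 / (α + 2))) := by
      have := hΔ₀.1; positivity
    exact (csInf_le hbdd ⟨Δb, hΔb, hdb, hle, rfl⟩).trans (le_add_of_nonneg_right hΔ₀term)
  · have hdim : apxDim H f Δ₀ ≤ apxDim H f Δb := apxDim_antitoneOn hf hΔb.1 hΔ₀.1 hlt.le
    exact (csInf_le hbdd ⟨Δ₀, hΔ₀, hdim.trans hdb, le_rfl, rfl⟩).trans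
      (epsNDD_le_epsNDD_add hδ0 hδ1 hdim hdb hΔ₀.1 hΔb.1)

lemma mul_rpow_neg_half_mul_rpow_lt_self {α x t δ : ℝ} (hα : 0 < α) (hx : 0 < x) (ht0 : 0 ≤ t)
    (ht : t < x ^ (α / (2 + α))) (hδ : 0 < δ) :
    δ * x ^ (-(1 / 2 : ℝ)) * t ^ (1 / α + 1 / 2) < δ := by
  have ht' : t ^ (1 / α + 1 / 2) < x ^ (1 / 2 : ℝ) := by
    have := rpow_lt_rpow ht0 ht (by positivity : (0 : ℝ) < 1 / α + 1 / 2)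
    rwa [← rpow_mul hx.le, show α / (2 + α) * (1 / α + 1 / 2) = 1 / 2 by field_simp] at this
  calc δ * x ^ (-(1 / 2 : ℝ)) * t ^ (1 / α + 1 / 2)
      < δ * x ^ (-(1 / 2 : ℝ)) * x ^ (1 / 2 : ℝ) := by gcongr
    _ = δ := by rw [mul_assoc, ← rpow_add hx]; norm_num

lemma mul_rpow_neg_half_mul_rpow_div_rpow_mul_rpow_eq_div {α x t δ : ℝ} (hα : 0 < α)
    (hx : 0 < x) (ht : 0 ≤ t) (hδ : δ ≠ 0) :
    (δ * x ^ (-(1 / 2 : ℝ)) * t ^ (1 / α + 1 / 2) / δ) ^ (2 * α / (α + 2)) *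
      x ^ (-(2 / (α + 2))) = t / x := by
  have hα2 : α + 2 ≠ 0 := by linarith
  rw [mul_assoc, mul_div_cancel_left₀ _ hδ, mul_rpow (by positivity) (by positivity),
    ← rpow_mul hx.le, ← rpow_mul ht, mul_right_comm, ← rpow_add hx,
    show (1 / α + 1 / 2) * (2 * α / (α + 2)) = 1 by field_simp; ring,
    show -(1 / 2 : ℝ) * (2 * α / (α + 2)) + -(2 / (α + 2)) = -1 by field_simp; ring,
    rpow_one, rpow_neg_one, inv_mul_eq_div]

/-- Step 4 of the proof of Theorem 3 (inequality (st4′)): with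
`Δ₀ = δ n^{−1/2} t^{1/α+1/2}`, for every `Δ̄ ∈ Δ_f`,
`inf{ε_n(d(f;Δ);δ;Δ) : Δ ∈ Δ_f, Δ ≥ Δ₀} ≤ ε_n(d(f;Δ̄);δ;Δ̄) + t/n`; in particular, if the
infimum defining `ε_n(f;δ)` is attained at `Δ̄ ∈ Δ_f`, then it is `≤ ε_n(f;δ) + t/n`. -/
theorem stmt18 {S : Type*} (H : Set (S → ℝ)) (V : ℝ) (hV : 0 < V)
    (α : ℝ) (hα : α = 2 * V / (V + 2)) (n : ℕ) (hn : 1 ≤ n)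
    (f : S → ℝ) (hf : f ∈ symConv H) (δ : ℝ) (hδ : δ ∈ Set.Ioo (0 : ℝ) 1)
    (t : ℝ) (ht0 : 0 < t) (ht : t < (n : ℝ) ^ (α / (2 + α))) :
    (∀ Δb ∈ Set.Icc (0 : ℝ) 1, apxDim H f Δb ≤ n →
      sInf {v : ℝ | ∃ Δ ∈ Set.Icc (0 : ℝ) 1, apxDim H f Δ ≤ n ∧
          δ * (n : ℝ) ^ (-(1 / 2 : ℝ)) * t ^ (1 / α + 1 / 2) ≤ Δ ∧
          v = epsNDD α n (apxDim H f Δ) δ Δ} ≤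
        epsNDD α n (apxDim H f Δb) δ Δb + t / n) ∧
    (∀ Δb ∈ Set.Icc (0 : ℝ) 1, apxDim H f Δb ≤ n →
      rawEps α n (apxDim H f Δb) δ Δb =
        sInf {v : ℝ | ∃ Δ ∈ Set.Icc (0 : ℝ) 1, apxDim H f Δ ≤ n ∧
          v = rawEps α n (apxDim H f Δ) δ Δ} →
      sInf {v : ℝ | ∃ Δ ∈ Set.Icc (0 : ℝ) 1, apxDim H f Δ ≤ n ∧
          δ * (n : ℝ) ^ (-(1 / 2 : ℝ)) * t ^ (1 / α + 1 / 2) ≤ Δ ∧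
          v = epsNDD α n (apxDim H f Δ) δ Δ} ≤
        epsDim H α n f δ + t / n) := by
  obtain ⟨hδ0, hδ1⟩ := hδ
  have hα0 : 0 < α := by rw [hα]; positivity
  have hn0 : (0 : ℝ) < n := by exact_mod_cast hn
  have hΔ₀ : δ * (n : ℝ) ^ (-(1 / 2 : ℝ)) * t ^ (1 / α + 1 / 2) ∈ Icc (0 : ℝ) 1 :=
    ⟨by positivity, (mul_rpow_neg_half_mul_rpow_lt_self hα0 hn0 ht0.le ht hδ0).le.trans hδ1.le⟩
  have bound := fun Δb (hΔb : Δb ∈ Icc (0 : ℝ) 1) (hdb : apxDim H f Δb ≤ n) =>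
    (sInf_epsNDD_le_epsNDD_add (α := α) hf hδ0 hδ1.le hΔ₀ hΔb hdb).trans_eq <| by
      rw [mul_rpow_neg_half_mul_rpow_div_rpow_mul_rpow_eq_div hα0 hn0 ht0.le hδ0.ne']
  refine ⟨bound, fun Δb hΔb hdb hmin => ?_⟩
  rw [epsDim, ← hmin]
  exact bound Δb hΔb hdb

end
end
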